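/- Reduction correctness for Theorem 8 (Nash stable existence vs. perfect assignment): Let (N, A, P) be an a-GASP instance with N = {1,…,n}, A* and approval sets S_i. Construct (N', A', P') where N' = N ∪ {n+1}, A'* = A* ∪ {b} for a new activity b, S'_i = S_i ∪ {(b,1)} for i ∈ N, and S'_{n+1} = {(b,2)}. Then (N, A, P) admits a perfect assignment if and only if (N', A', P') admits a Nash stable assignment. -/
import Mathlib


/-- The group of agents assigned to activity `a` under assignment `π`
(`none` stands for the void activity `a_∅`). -/
def grp {ι α : Type*} [Fintype ι] [DecidableEq α] (π : ι → Option α) (a : α) : Finset ι :=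
  Finset.univ.filter (fun i => π i = some a)

/-- An assignment is individually rational if every agent assigned to a non-void
activity `a` approves the alternative `(a, size of the group doing a)`.
`S i a` is the set of group sizes `k` such that agent `i` approves `(a, k)`. -/
def IndivRat {ι α : Type*} [Fintype ι] [DecidableEq α]
    (S : ι → α → Finset ℕ) (π : ι → Option α) : Prop :=
  ∀ i a, π i = some a → (grp π a).card ∈ S i a

/-- Nash stability: individual rationality plus no agent assigned to the void
activity approves joining an existing group. -/
def NashStable {ι α : Type*} [Fintype ι] [DecidableEq α]
    (S : ι → α → Finset ℕ) (π : ι → Option α) : Prop :=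
  IndivRat S π ∧ ∀ i a, π i = none → (grp π a).card + 1 ∉ S i a

/-- The number of agents assigned to a non-void activity. -/
def numActive {ι α : Type*} [Fintype ι] [DecidableEq α] (π : ι → Option α) : ℕ :=
  (Finset.univ.filter (fun i => π i ≠ none)).card

lemma mem_grp {ι α : Type*} [Fintype ι] [DecidableEq α] (π : ι → Option α) (a : α) (i : ι) :
    i ∈ grp π a ↔ π i = some a := by simp [grp]

lemma grp_card_lift {ι α : Type*} [Fintype ι] [DecidableEq ι] [DecidableEq α]
    (π : ι → Option α) (π' : ι ⊕ Unit → Option (α ⊕ Unit))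
    (h : ∀ i a, π' (Sum.inl i) = some (Sum.inl a) ↔ π i = some a)
    (h2 : ∀ a, π' (Sum.inr ()) ≠ some (Sum.inl a)) (a : α) :
    (grp π' (Sum.inl a)).card = (grp π a).card := by
  have : grp π' (Sum.inl a) = (grp π a).map ⟨Sum.inl, Sum.inl_injective⟩ := by
    ext j
    rcases j with i | u
    · simp [mem_grp, h]
    · simp [mem_grp, h2]
  simp [this]

/-- Correctness of the reduction from perfect assignment to Nash stable
existence: given an a-GASP instance with agents ι and activities α, add one new
agent and one new activity b; every original agent additionally approves (b, 1),
and the new agent approves exactly {(b, 2)}. The original instance admits a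
perfect assignment iff the new instance admits a Nash stable assignment. -/
theorem stmt17 {ι α : Type*} [Fintype ι] [DecidableEq ι] [DecidableEq α]
    (S : ι → α → Finset ℕ) :
    (∃ π : ι → Option α, IndivRat S π ∧ ∀ i, π i ≠ none) ↔
      ∃ π' : ι ⊕ Unit → Option (α ⊕ Unit),
        NashStable (fun i a =>
          match i, a with
          | Sum.inl i, Sum.inl a => S i a
          | Sum.inl _, Sum.inr _ => ({1} : Finset ℕ)
          | Sum.inr _, Sum.inl _ => (∅ : Finset ℕ)
          | Sum.inr _, Sum.inr _ => ({2} : Finset ℕ)) π' := by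
  constructor
  · rintro ⟨π, hIR, hfull⟩
    refine ⟨Sum.elim (fun i => (π i).map Sum.inl) (fun _ => none), ?_, ?_⟩
    · intro j a hj
      rcases j with i | u <;> rcases a with a | b
      · simp only [Sum.elim_inl, Option.map_eq_some_iff] at hj
        obtain ⟨a', ha', heq⟩ := hj
        cases heq
        rw [grp_card_lift π _ (by intro i a; simp) (by intro a; simp) a]
        exact hIR i a ha'
      · simp only [Sum.elim_inl, Option.map_eq_some_iff] at hj
        obtain ⟨a', _, heq⟩ := hj
        exact absurd heq (by simp)
      · simp at hj
      · simp at hj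
    · intro j a hj
      rcases j with i | u <;> rcases a with a | b
      · exact absurd hj (by simpa using hfull i)
      · exact absurd hj (by simpa using hfull i)
      · simp
      · -- new agent, activity b: group at b is empty
        have : grp (Sum.elim (fun i => (π i).map Sum.inl)
            (fun _ : Unit => (none : Option (α ⊕ Unit)))) (Sum.inr b) = ∅ := by
          ext j
          rcases j with i | u <;> simp [mem_grp]
        simp [this]
  · rintro ⟨π', hIR, hNS⟩
    -- new agent must be unassigned
    have hnew : π' (Sum.inr ()) = none := by
      rcases hπ' : π' (Sum.inr ()) with _ | (a | b)
      · rfl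
      · exact absurd (hIR (Sum.inr ()) (Sum.inl a) hπ') (by simp)
      · -- group at b has card 2, contains inr () and some inl i
        exfalso
        have hc := hIR (Sum.inr ()) (Sum.inr b) hπ'
        simp only [Finset.mem_singleton] at hc
        -- some original agent is in grp π' (inr b)
        have hmem : Sum.inr () ∈ grp π' (Sum.inr b) := (mem_grp _ _ _).2 hπ'
        have h1 : ∃ i : ι, Sum.inl i ∈ grp π' (Sum.inr b) := by
          by_contra hno
          push_neg at hno
          have : grp π' (Sum.inr b) ⊆ {Sum.inr ()} := by
            intro j hj
            rcases j with i | u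
            · exact absurd hj (hno i)
            · simp
          have := Finset.card_le_card this
          simp [hc] at this
        obtain ⟨i, hi⟩ := h1
        have := hIR (Sum.inl i) (Sum.inr b) ((mem_grp _ _ _).1 hi)
        rw [hc] at this
        simp at this
    -- every original agent is assigned, and not to b
    have hass : ∀ i : ι, ∃ a : α, π' (Sum.inl i) = some (Sum.inl a) := by
      -- first: group at b must be empty
      have hbempty : grp π' (Sum.inr ()) = ∅ := by
        by_contra hne
        obtain ⟨j, hj⟩ := Finset.nonempty_iff_ne_empty.2 hne
        have hcard := Finset.card_pos.2 ⟨j, hj⟩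
        rcases j with i | u
        · have := hIR (Sum.inl i) (Sum.inr ()) ((mem_grp _ _ _).1 hj)
          simp only [Finset.mem_singleton] at this
          have hb := hNS (Sum.inr ()) (Sum.inr ()) hnew
          rw [this] at hb
          simp at hb
        · rw [mem_grp] at hj
          rw [hnew] at hj
          exact absurd hj (by simp)
      intro i
      rcases hπ' : π' (Sum.inl i) with _ | (a | b)
      · -- unassigned original agent would want to join b (size 1)
        exfalso
        have := hNS (Sum.inl i) (Sum.inr ()) hπ'
        rw [hbempty] at this
        simp at this
      · exact ⟨a, rfl⟩
      · exfalso
        have : Sum.inl i ∈ grp π' (Sum.inr ()) := (mem_grp _ _ _).2 (by cases b; exact hπ')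
        rw [hbempty] at this
        simp at this
    choose f hf using hass
    refine ⟨fun i => some (f i), ?_, by simp⟩
    intro i a ha
    simp only [Option.some_inj] at ha
    subst ha
    have hc := grp_card_lift (fun i => some (f i)) π'
      (by intro i a; rw [hf i]; simp) (by intro a; rw [hnew]; simp) (f i)
    rw [← hc]
    exact hIR (Sum.inl i) (Sum.inl (f i)) (hf i)
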